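/- Let {a_j} be a positive solution of the inviscid dyadic model on [0,∞) (i.e. a_j(t) > 0 for all j ≥ 0 and t ≥ 0) with finite energy: Σ_{j≥0} a_j(t)² < ∞ for all t ≥ 0. Then the energy vanishes asymptotically (anomalous dissipation): lim_{t→∞} Σ_{j≥0} a_j(t)² = 0. -/

import Mathlib

/-!
Energy only moves to higher modes: the first `n + 1` modes lose energy at rate
`2 λ^(n+1) a_n² a_(n+1)`, so the energy `E` is nonincreasing and every `a_j` is bounded by
`M = √E(0)`. Suppose `E ≥ L > 0` forever. Then at every time `t` some mode `k` carries
`a_k² ≥ c q^k` for a fixed `q < 1`. On `[t, t + 2 τ_k]`, with `τ_k = (λ^(k+2) M)⁻¹`, this mode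
keeps a fixed fraction of its size, while by time `t + τ_k` it has driven `a_(k+1)` up to order
`a_k² / (λ M)`; hence the first `k + 1` modes lose energy `≳ λ^k a_k⁴ τ_k / M`. Weighted by
`(q² λ)^(-k)`, the total energy lost grows at a uniform linear rate, yet it is bounded because
`q² λ > 1`: a contradiction.
-/

open MeasureTheory Filter
open scoped ENNReal

/-- A solution of the inviscid dyadic model on `[0,∞)`:
`a_j' = λ_j a_{j-1}² − λ_{j+1} a_j a_{j+1}`, with `λ_j = lam ^ j` and `a_{-1} ≡ 0`. -/
def IsInviscidSol (lam : ℝ) (a : ℕ → ℝ → ℝ) : Prop :=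
  ∀ j : ℕ, ∀ t ∈ Set.Ici (0 : ℝ),
    HasDerivWithinAt (a j)
      (lam ^ j * (if j = 0 then (0 : ℝ) else a (j - 1) t) ^ 2
        - lam ^ (j + 1) * a j t * a (j + 1) t) (Set.Ici 0) t

open Set Real

theorem add_sub_mul_exp_le_of_hasDerivWithinAt {f f' : ℝ → ℝ} {s : Set ℝ} (hs : Convex ℝ s)
    (hf : ∀ u ∈ s, HasDerivWithinAt f (f' u) s u) {c B : ℝ}
    (hf' : ∀ u ∈ s, c * (B - f u) ≤ f' u) {t₀ t₁ : ℝ} (ht₀ : t₀ ∈ s) (ht₁ : t₁ ∈ s)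
    (h : t₀ ≤ t₁) : B + (f t₀ - B) * exp (-(c * (t₁ - t₀))) ≤ f t₁ := by
  have hderiv : ∀ u ∈ s, HasDerivWithinAt (fun u => (f u - B) * exp (c * u))
      (exp (c * u) * (f' u + c * (f u - B))) s u := by
    intro u hu
    exact (((hf u hu).sub_const B).mul
      (((hasDerivAt_id' u).const_mul c).exp.hasDerivWithinAt)).congr_deriv (by ring)
  have hmono : MonotoneOn (fun u => (f u - B) * exp (c * u)) s :=
    monotoneOn_of_hasDerivWithinAt_nonneg hs (fun u hu => (hderiv u hu).continuousWithinAt)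
      (fun u hu => (hderiv u (interior_subset hu)).mono interior_subset)
      (fun u hu => mul_nonneg (exp_pos _).le (by linarith [hf' u (interior_subset hu)]))
  have hexp : exp (-(c * (t₁ - t₀))) = exp (c * t₀) / exp (c * t₁) := by
    rw [← exp_sub]; congr 1; ring
  have : (f t₀ - B) * exp (-(c * (t₁ - t₀))) ≤ f t₁ - B := by
    rw [hexp, mul_div_assoc', div_le_iff₀ (exp_pos _)]
    exact hmono ht₀ ht₁ h
  linarith

theorem not_bddAbove_image_of_forall_exists_add_mul_le {F : ℝ → ℝ} {ρ : ℝ} (hρ : 0 < ρ)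
    (hF : MonotoneOn F (Ici 0)) (hstep : ∀ t, 0 ≤ t → ∃ τ > 0, F t + ρ * τ ≤ F (t + τ)) :
    ¬BddAbove (F '' Ici 0) := by
  rintro ⟨C, hC⟩
  set A := {t : ℝ | 0 ≤ t ∧ F 0 + ρ * t ≤ F t}
  have hA0 : (0 : ℝ) ∈ A := ⟨le_rfl, by simp⟩
  have hA : BddAbove A := ⟨(C - F 0) / ρ, fun t ht => by
    rw [le_div_iff₀ hρ]; linarith [ht.2, hC (mem_image_of_mem F ht.1)]⟩
  set s := sSup A
  have hs : 0 ≤ s := le_csSup hA hA0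
  have hsA : F 0 + ρ * s ≤ F s := by
    have : s ≤ (F s - F 0) / ρ := csSup_le ⟨0, hA0⟩ fun t ht => by
      rw [le_div_iff₀ hρ]; linarith [ht.2, hF ht.1 hs (le_csSup hA ht)]
    rw [le_div_iff₀ hρ] at this; linarith
  obtain ⟨τ, hτ, hFτ⟩ := hstep s hs
  have : s + τ ∈ A := ⟨by linarith, by linarith⟩
  linarith [le_csSup hA this]

theorem exists_mul_pow_lt_of_div_lt_tsum {x : ℕ → ℝ} (hx : Summable x) {q c : ℝ} (hq₀ : 0 ≤ q)
    (hq₁ : q < 1) (h : c / (1 - q) < ∑' k, x k) : ∃ k, c * q ^ k < x k := by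
  by_contra! hle
  have := hx.tsum_le_tsum hle ((summable_geometric_of_lt_one hq₀ hq₁).mul_left c)
  rw [tsum_mul_left, tsum_geometric_of_lt_one hq₀ hq₁, ← div_eq_mul_inv] at this
  linarith

theorem exists_pos_lt_one_one_lt_sq_mul {lam : ℝ} (hlam : 1 < lam) :
    ∃ q : ℝ, 0 < q ∧ q < 1 ∧ 1 < q ^ 2 * lam := by
  have hlam₀ : 0 < lam := one_pos.trans hlam
  refine ⟨(1 + lam) / (2 * lam), by positivity, by rw [div_lt_one (by positivity)]; linarith, ?_⟩
  rw [div_pow, div_mul_eq_mul_div, one_lt_div (by positivity)]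
  nlinarith [sq_pos_of_pos (sub_pos.2 hlam)]

noncomputable def energy (a : ℕ → ℝ → ℝ) (t : ℝ) : ℝ := ∑' j, a j t ^ 2

def partialEnergy (a : ℕ → ℝ → ℝ) (n : ℕ) (t : ℝ) : ℝ := ∑ j ∈ Finset.range n, a j t ^ 2

def flux (lam : ℝ) (a : ℕ → ℝ → ℝ) (n : ℕ) (t : ℝ) : ℝ := lam ^ (n + 1) * a n t ^ 2 * a (n + 1) t

noncomputable def weightedLoss (w : ℝ) (a : ℕ → ℝ → ℝ) (t : ℝ) : ℝ :=
  ∑' k, w ^ k * (partialEnergy a (k + 1) 0 - partialEnergy a (k + 1) t)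

theorem partialEnergy_le_energy {a : ℕ → ℝ → ℝ} {t : ℝ} (h : Summable fun j => a j t ^ 2)
    (n : ℕ) : partialEnergy a n t ≤ energy a t :=
  h.sum_le_tsum _ fun _ _ => sq_nonneg _

theorem sub_partialEnergy_le_energy {a : ℕ → ℝ → ℝ} (h₀ : Summable fun j => a j 0 ^ 2) (n : ℕ)
    (t : ℝ) : partialEnergy a n 0 - partialEnergy a n t ≤ energy a 0 := by
  have : 0 ≤ partialEnergy a n t := Finset.sum_nonneg fun _ _ => sq_nonneg _
  linarith [partialEnergy_le_energy h₀ n]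

theorem flux_nonneg {lam : ℝ} {a : ℕ → ℝ → ℝ} (hlam : 0 ≤ lam)
    (hnn : ∀ j t, 0 ≤ t → 0 ≤ a j t) (n : ℕ) {t : ℝ} (ht : 0 ≤ t) : 0 ≤ flux lam a n t := by
  have := hnn (n + 1) t ht
  unfold flux
  positivity

namespace IsInviscidSol

variable {lam : ℝ} {a : ℕ → ℝ → ℝ} {w M : ℝ}

theorem continuousOn (hsol : IsInviscidSol lam a) (j : ℕ) : ContinuousOn (a j) (Ici 0) :=
  fun t ht => (hsol j t ht).continuousWithinAt

theorem continuousOn_flux (hsol : IsInviscidSol lam a) (n : ℕ) :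
    ContinuousOn (flux lam a n) (Ici 0) :=
  (continuousOn_const.mul ((hsol.continuousOn n).pow 2)).mul (hsol.continuousOn (n + 1))

theorem hasDerivWithinAt_partialEnergy (hsol : IsInviscidSol lam a) (n : ℕ) {t : ℝ}
    (ht : 0 ≤ t) :
    HasDerivWithinAt (partialEnergy a (n + 1)) (-(2 * flux lam a n t)) (Ici 0) t := by
  induction n with
  | zero =>
    have hfun : partialEnergy a 1 = a 0 ^ 2 := by ext u; simp [partialEnergy]
    rw [hfun]
    exact ((hsol 0 t ht).pow 2).congr_deriv (by simp [flux]; ring)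
  | succ n ih =>
    have hfun : partialEnergy a (n + 2) = partialEnergy a (n + 1) + a (n + 1) ^ 2 := by
      ext u; simp [partialEnergy, Finset.sum_range_succ]
    rw [hfun]
    exact (ih.add ((hsol (n + 1) t ht).pow 2)).congr_deriv (by simp [flux]; ring)

theorem partialEnergy_add_integral_flux (hsol : IsInviscidSol lam a) (n : ℕ) {s t : ℝ}
    (hs : 0 ≤ s) (hst : s ≤ t) :
    partialEnergy a (n + 1) t + 2 * ∫ u in s..t, flux lam a n u = partialEnergy a (n + 1) s := by
  have hsub : Icc s t ⊆ Ici 0 := fun u hu => hs.trans hu.1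
  have hderiv := fun u (hu : 0 ≤ u) => hsol.hasDerivWithinAt_partialEnergy n hu
  have hFTC := intervalIntegral.integral_eq_sub_of_hasDeriv_right_of_le hst
    (fun u hu => (hderiv u (hsub hu)).continuousWithinAt.mono hsub)
    (fun u hu => (hderiv u (hs.trans hu.1.le)).mono (Ioi_subset_Ici (hs.trans hu.1.le)))
    (((hsol.continuousOn_flux n).mono (by rwa [uIcc_of_le hst])).intervalIntegrable.const_mul
      2).neg
  rw [intervalIntegral.integral_neg, intervalIntegral.integral_const_mul] at hFTC
  linarith

theorem partialEnergy_antitoneOn (hsol : IsInviscidSol lam a) (hlam : 0 ≤ lam)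
    (hnn : ∀ j t, 0 ≤ t → 0 ≤ a j t) (n : ℕ) : AntitoneOn (partialEnergy a n) (Ici 0) := by
  intro s hs t _ hst
  cases n with
  | zero => simp [partialEnergy]
  | succ n =>
    have hbalance := hsol.partialEnergy_add_integral_flux n hs hst
    have : 0 ≤ ∫ u in s..t, flux lam a n u := intervalIntegral.integral_nonneg hst fun u hu =>
      flux_nonneg hlam hnn n (le_trans hs hu.1)
    linarith

theorem energy_antitoneOn (hsol : IsInviscidSol lam a) (hlam : 0 ≤ lam)
    (hnn : ∀ j t, 0 ≤ t → 0 ≤ a j t) (hfin : ∀ t, 0 ≤ t → Summable fun j => a j t ^ 2) :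
    AntitoneOn (energy a) (Ici 0) := fun s hs _ ht hst =>
  Real.tsum_le_of_sum_range_le (fun _ => sq_nonneg _) fun n =>
    (hsol.partialEnergy_antitoneOn hlam hnn n hs ht hst).trans
      (partialEnergy_le_energy (hfin s hs) n)

theorem le_sqrt_energy_zero (hsol : IsInviscidSol lam a) (hlam : 0 ≤ lam)
    (hnn : ∀ j t, 0 ≤ t → 0 ≤ a j t) (h₀ : Summable fun j => a j 0 ^ 2) (j : ℕ) {t : ℝ}
    (ht : 0 ≤ t) : a j t ≤ √(energy a 0) := by
  have hsq : a j t ^ 2 ≤ energy a 0 := calc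
    a j t ^ 2 ≤ partialEnergy a (j + 1) t := by
      simp only [partialEnergy, Finset.sum_range_succ, le_add_iff_nonneg_left]
      positivity
    _ ≤ partialEnergy a (j + 1) 0 := hsol.partialEnergy_antitoneOn hlam hnn _ self_mem_Ici ht ht
    _ ≤ energy a 0 := partialEnergy_le_energy h₀ _
  exact (le_abs_self _).trans (Real.abs_le_sqrt hsq)

theorem mul_exp_le (hsol : IsInviscidSol lam a) (hlam : 0 ≤ lam)
    (hnn : ∀ j t, 0 ≤ t → 0 ≤ a j t) (hM : ∀ j t, 0 ≤ t → a j t ≤ M) (k : ℕ) {t s : ℝ}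
    (ht : 0 ≤ t) (hts : t ≤ s) : a k t * exp (-(lam ^ (k + 1) * M * (s - t))) ≤ a k s := by
  have := add_sub_mul_exp_le_of_hasDerivWithinAt (convex_Ici 0) (hsol k)
    (c := lam ^ (k + 1) * M) (B := 0) (fun u hu => ?_) ht (ht.trans hts) hts
  · simpa using this
  · have hgain : 0 ≤ lam ^ k * (if k = 0 then (0 : ℝ) else a (k - 1) u) ^ 2 := by positivity
    have hloss : lam ^ (k + 1) * a k u * a (k + 1) u ≤ lam ^ (k + 1) * a k u * M :=
      mul_le_mul_of_nonneg_left (hM _ _ hu) (mul_nonneg (by positivity) (hnn k u hu))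
    linarith

theorem one_sub_exp_mul_div_le (hsol : IsInviscidSol lam a) (hlam : 0 < lam)
    (hnn : ∀ j t, 0 ≤ t → 0 ≤ a j t) (hM : ∀ j t, 0 ≤ t → a j t ≤ M) (hM₀ : 0 < M) (k : ℕ)
    {t s b : ℝ} (ht : 0 ≤ t) (hts : t ≤ s) (hb : ∀ u ∈ Icc t s, b ≤ a k u ^ 2) :
    (1 - exp (-(lam ^ (k + 2) * M * (s - t)))) * (b / (lam * M)) ≤ a (k + 1) s := by
  have hsub : Icc t s ⊆ Ici 0 := fun u hu => ht.trans hu.1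
  have hrate : lam ^ (k + 2) * M * (b / (lam * M)) = lam ^ (k + 1) * b := by
    field_simp; ring
  have := add_sub_mul_exp_le_of_hasDerivWithinAt (convex_Icc t s)
    (fun u hu => (hsol (k + 1) u (hsub hu)).mono hsub) (c := lam ^ (k + 2) * M)
    (B := b / (lam * M)) (fun u hu => ?_) (left_mem_Icc.2 hts) (right_mem_Icc.2 hts) hts
  · have := mul_nonneg (hnn (k + 1) t ht) (exp_pos (-(lam ^ (k + 2) * M * (s - t)))).le
    linarith
  · have hu0 : 0 ≤ u := hsub hu
    simp only [Nat.add_eq_zero_iff, one_ne_zero, and_false, if_false, Nat.add_sub_cancel]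
    have hgain := mul_le_mul_of_nonneg_left (hb u hu) (pow_nonneg hlam.le (k + 1))
    have hloss : lam ^ (k + 1 + 1) * a (k + 1) u * a (k + 1 + 1) u
        ≤ lam ^ (k + 2) * M * a (k + 1) u := by
      rw [mul_right_comm _ M]
      exact mul_le_mul_of_nonneg_left (hM _ _ hu0) (mul_nonneg (by positivity) (hnn _ u hu0))
    linarith

theorem le_flux (hsol : IsInviscidSol lam a) (hlam : 1 ≤ lam)
    (hnn : ∀ j t, 0 ≤ t → 0 ≤ a j t) (hM : ∀ j t, 0 ≤ t → a j t ≤ M) (hM₀ : 0 < M) (k : ℕ)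
    {t τ s : ℝ} (ht : 0 ≤ t) (hτ : lam ^ (k + 2) * M * τ = 1)
    (hs : s ∈ Icc (t + τ) (t + 2 * τ)) :
    (1 - exp (-1)) * exp (-8) * lam ^ k * a k t ^ 4 / M ≤ flux lam a k s := by
  have hlam₀ : 0 < lam := one_pos.trans_le hlam
  have hτ₀ : 0 < τ := by
    have : 0 < lam ^ (k + 2) * M := by positivity
    nlinarith
  have hts : t ≤ s := by linarith [hs.1]
  have hsq : ∀ u ∈ Icc t s, exp (-4) * a k t ^ 2 ≤ a k u ^ 2 := by
    rintro u ⟨htu, hus⟩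
    have hpow : lam ^ (k + 1) ≤ lam ^ (k + 2) := pow_le_pow_right₀ hlam (by omega)
    have hdecay : exp (-2) ≤ exp (-(lam ^ (k + 1) * M * (u - t))) := by
      refine exp_le_exp.2 (neg_le_neg ?_)
      calc lam ^ (k + 1) * M * (u - t) ≤ lam ^ (k + 2) * M * (2 * τ) := by
            gcongr; linarith [hs.2]
        _ = 2 := by linarith
    have hmode := (mul_le_mul_of_nonneg_left hdecay (hnn k t ht)).trans
      (hsol.mul_exp_le hlam₀.le hnn hM k ht htu)
    calc exp (-4) * a k t ^ 2 = (a k t * exp (-2)) ^ 2 := by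
          rw [mul_pow, ← exp_nat_mul]; norm_num; ring
      _ ≤ a k u ^ 2 := pow_le_pow_left₀ (by have := hnn k t ht; positivity) hmode 2
  have hnext : (1 - exp (-1)) * (exp (-4) * a k t ^ 2 / (lam * M)) ≤ a (k + 1) s := by
    refine le_trans ?_ (hsol.one_sub_exp_mul_div_le hlam₀ hnn hM hM₀ k ht hts hsq)
    gcongr
    nlinarith [hs.1]
  calc (1 - exp (-1)) * exp (-8) * lam ^ k * a k t ^ 4 / M
      = lam ^ (k + 1) * (exp (-4) * a k t ^ 2)
          * ((1 - exp (-1)) * (exp (-4) * a k t ^ 2 / (lam * M))) := by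
        rw [show exp (-8) = exp (-4) * exp (-4) by rw [← exp_add]; norm_num]
        field_simp
        ring
    _ ≤ lam ^ (k + 1) * a k s ^ 2 * a (k + 1) s := by
        have : 0 ≤ 1 - exp (-1) := sub_nonneg.2 (exp_le_one_iff.2 (by norm_num))
        gcongr
        exact hsq s (right_mem_Icc.2 hts)

theorem summable_weightedLoss (hsol : IsInviscidSol lam a) (hlam : 0 ≤ lam)
    (hnn : ∀ j t, 0 ≤ t → 0 ≤ a j t) (h₀ : Summable fun j => a j 0 ^ 2) (hw₀ : 0 ≤ w)
    (hw₁ : w < 1) {t : ℝ} (ht : 0 ≤ t) :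
    Summable fun k => w ^ k * (partialEnergy a (k + 1) 0 - partialEnergy a (k + 1) t) := by
  refine ((summable_geometric_of_lt_one hw₀ hw₁).mul_right (energy a 0)).of_nonneg_of_le
    (fun k => mul_nonneg (pow_nonneg hw₀ k) ?_) (fun k => ?_)
  · exact sub_nonneg.2 (hsol.partialEnergy_antitoneOn hlam hnn _ self_mem_Ici ht ht)
  · exact mul_le_mul_of_nonneg_left (sub_partialEnergy_le_energy h₀ _ t) (pow_nonneg hw₀ k)

theorem mul_sub_le_weightedLoss_sub (hsol : IsInviscidSol lam a) (hlam : 0 ≤ lam)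
    (hnn : ∀ j t, 0 ≤ t → 0 ≤ a j t) (h₀ : Summable fun j => a j 0 ^ 2) (hw₀ : 0 ≤ w)
    (hw₁ : w < 1) (k : ℕ) {t t' : ℝ} (ht : 0 ≤ t) (htt' : t ≤ t') :
    w ^ k * (partialEnergy a (k + 1) t - partialEnergy a (k + 1) t')
      ≤ weightedLoss w a t' - weightedLoss w a t := by
  have hsum := fun {t : ℝ} (ht : 0 ≤ t) => hsol.summable_weightedLoss hlam hnn h₀ hw₀ hw₁ ht
  calc w ^ k * (partialEnergy a (k + 1) t - partialEnergy a (k + 1) t')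
      = w ^ k * (partialEnergy a (k + 1) 0 - partialEnergy a (k + 1) t')
          - w ^ k * (partialEnergy a (k + 1) 0 - partialEnergy a (k + 1) t) := by ring
    _ ≤ ∑' j, (w ^ j * (partialEnergy a (j + 1) 0 - partialEnergy a (j + 1) t')
          - w ^ j * (partialEnergy a (j + 1) 0 - partialEnergy a (j + 1) t)) :=
        ((hsum (ht.trans htt')).sub (hsum ht)).le_tsum k fun j _ => by
          rw [← mul_sub]
          exact mul_nonneg (pow_nonneg hw₀ j) (by
            linarith [hsol.partialEnergy_antitoneOn hlam hnn (j + 1) ht (ht.trans htt') htt'])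
    _ = weightedLoss w a t' - weightedLoss w a t := (hsum (ht.trans htt')).tsum_sub (hsum ht)

theorem weightedLoss_le (hsol : IsInviscidSol lam a) (hlam : 0 ≤ lam)
    (hnn : ∀ j t, 0 ≤ t → 0 ≤ a j t) (h₀ : Summable fun j => a j 0 ^ 2) (hw₀ : 0 ≤ w)
    (hw₁ : w < 1) {t : ℝ} (ht : 0 ≤ t) : weightedLoss w a t ≤ energy a 0 / (1 - w) := by
  calc weightedLoss w a t ≤ ∑' k, w ^ k * energy a 0 :=
        (hsol.summable_weightedLoss hlam hnn h₀ hw₀ hw₁ ht).tsum_le_tsum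
          (fun k => mul_le_mul_of_nonneg_left (sub_partialEnergy_le_energy h₀ _ t)
            (pow_nonneg hw₀ k))
          ((summable_geometric_of_lt_one hw₀ hw₁).mul_right _)
    _ = energy a 0 / (1 - w) := by
        rw [tsum_mul_right, tsum_geometric_of_lt_one hw₀ hw₁, div_eq_inv_mul]

theorem monotoneOn_weightedLoss (hsol : IsInviscidSol lam a) (hlam : 0 ≤ lam)
    (hnn : ∀ j t, 0 ≤ t → 0 ≤ a j t) (h₀ : Summable fun j => a j 0 ^ 2) (hw₀ : 0 ≤ w)
    (hw₁ : w < 1) : MonotoneOn (weightedLoss w a) (Ici 0) := by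
  intro t ht t' ht' htt'
  have hgain := hsol.mul_sub_le_weightedLoss_sub hlam hnn h₀ hw₀ hw₁ 0 ht htt'
  rw [pow_zero, one_mul] at hgain
  linarith [hsol.partialEnergy_antitoneOn hlam hnn (0 + 1) ht ht' htt']

theorem mul_le_partialEnergy_sub (hsol : IsInviscidSol lam a) (hlam : 1 ≤ lam)
    (hnn : ∀ j t, 0 ≤ t → 0 ≤ a j t) (hM : ∀ j t, 0 ≤ t → a j t ≤ M) (hM₀ : 0 < M) (k : ℕ)
    {t τ : ℝ} (ht : 0 ≤ t) (hτ : lam ^ (k + 2) * M * τ = 1) :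
    2 * τ * ((1 - exp (-1)) * exp (-8) * lam ^ k * a k t ^ 4 / M)
      ≤ partialEnergy a (k + 1) t - partialEnergy a (k + 1) (t + 2 * τ) := by
  set m := (1 - exp (-1)) * exp (-8) * lam ^ k * a k t ^ 4 / M
  have hτ₀ : 0 < τ := by
    have : 0 < lam ^ (k + 2) * M := by positivity
    nlinarith
  have hwindow : Icc (t + τ) (t + 2 * τ) ⊆ Ici 0 := fun u hu => mem_Ici.2 (by linarith [hu.1])
  have hbalance := hsol.partialEnergy_add_integral_flux k (hwindow (left_mem_Icc.2 (by linarith)))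
    (by linarith : t + τ ≤ t + 2 * τ)
  have hint : ∫ _ in (t + τ)..(t + 2 * τ), m ≤ ∫ u in (t + τ)..(t + 2 * τ), flux lam a k u :=
    intervalIntegral.integral_mono_on (by linarith) intervalIntegrable_const
      ((hsol.continuousOn_flux k).mono (by rwa [uIcc_of_le (by linarith)])).intervalIntegrable
      fun s hs => hsol.le_flux hlam hnn hM hM₀ k ht hτ hs
  rw [intervalIntegral.integral_const, smul_eq_mul, show t + 2 * τ - (t + τ) = τ by ring] at hint
  have hanti := hsol.partialEnergy_antitoneOn (zero_le_one.trans hlam) hnn (k + 1) (mem_Ici.2 ht)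
    (mem_Ici.2 (by linarith : 0 ≤ t + τ)) (by linarith)
  linarith

theorem exists_weightedLoss_add_mul_le (hsol : IsInviscidSol lam a) (hlam : 1 ≤ lam)
    (hnn : ∀ j t, 0 ≤ t → 0 ≤ a j t) (h₀ : Summable fun j => a j 0 ^ 2)
    (hM : ∀ j t, 0 ≤ t → a j t ≤ M) (hM₀ : 0 < M) {q c : ℝ} (hq : 0 < q)
    (hqlam : 1 < q ^ 2 * lam) (hc : 0 ≤ c) {k : ℕ} {t : ℝ} (ht : 0 ≤ t)
    (hk : c * q ^ k ≤ a k t ^ 2) :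
    ∃ τ > 0, weightedLoss (q ^ 2 * lam)⁻¹ a t + (1 - exp (-1)) * exp (-8) * c ^ 2 / M * τ
      ≤ weightedLoss (q ^ 2 * lam)⁻¹ a (t + τ) := by
  have hlam₀ : 0 < lam := one_pos.trans_le hlam
  set w := (q ^ 2 * lam)⁻¹
  have hw₀ : 0 ≤ w := by positivity
  have hw₁ : w < 1 := inv_lt_one_of_one_lt₀ hqlam
  set τ := (lam ^ (k + 2) * M)⁻¹
  have hτ : lam ^ (k + 2) * M * τ = 1 := mul_inv_cancel₀ (by positivity)
  have hτ₀ : 0 < τ := by positivity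
  have hweight : c ^ 2 ≤ w ^ k * lam ^ k * a k t ^ 4 := by
    have hwq : w ^ k * lam ^ k * (q ^ k) ^ 2 = 1 := by
      have : w * lam * q ^ 2 = 1 := by simp only [w]; field_simp
      rw [← mul_pow, ← pow_mul, mul_comm k 2, pow_mul, ← mul_pow, this, one_pow]
    calc c ^ 2 = c ^ 2 * (w ^ k * lam ^ k * (q ^ k) ^ 2) := by rw [hwq, mul_one]
      _ = w ^ k * lam ^ k * (c * q ^ k) ^ 2 := by ring
      _ ≤ w ^ k * lam ^ k * (a k t ^ 2) ^ 2 := by gcongr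
      _ = w ^ k * lam ^ k * a k t ^ 4 := by ring
  have hκ : 0 ≤ 1 - exp (-1) := sub_nonneg.2 (exp_le_one_iff.2 (by norm_num))
  refine ⟨2 * τ, by positivity, ?_⟩
  calc weightedLoss w a t + (1 - exp (-1)) * exp (-8) * c ^ 2 / M * (2 * τ)
      ≤ weightedLoss w a t + w ^ k * (2 * τ * ((1 - exp (-1)) * exp (-8) * lam ^ k
          * a k t ^ 4 / M)) := by
        have hrate : (1 - exp (-1)) * exp (-8) * c ^ 2 / M
            ≤ w ^ k * ((1 - exp (-1)) * exp (-8) * lam ^ k * a k t ^ 4 / M) :=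
          (by gcongr : _ ≤ (1 - exp (-1)) * exp (-8) * (w ^ k * lam ^ k * a k t ^ 4) / M).trans_eq
            (by ring)
        linarith [mul_le_mul_of_nonneg_right hrate (by positivity : (0 : ℝ) ≤ 2 * τ)]
    _ ≤ weightedLoss w a t
          + w ^ k * (partialEnergy a (k + 1) t - partialEnergy a (k + 1) (t + 2 * τ)) := by
        gcongr
        exact hsol.mul_le_partialEnergy_sub hlam hnn hM hM₀ k ht hτ
    _ ≤ weightedLoss w a (t + 2 * τ) := by
        linarith [hsol.mul_sub_le_weightedLoss_sub hlam₀.le hnn h₀ hw₀ hw₁ k ht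
          (by linarith : t ≤ t + 2 * τ)]

theorem exists_energy_lt (hsol : IsInviscidSol lam a) (hlam : 1 < lam)
    (hnn : ∀ j t, 0 ≤ t → 0 ≤ a j t) (hfin : ∀ t, 0 ≤ t → Summable fun j => a j t ^ 2) {L : ℝ}
    (hL : 0 < L) : ∃ t, 0 ≤ t ∧ energy a t < L := by
  by_contra! hLE
  have hlam₀ : 0 < lam := one_pos.trans hlam
  obtain ⟨q, hq₀, hq₁, hqlam⟩ := exists_pos_lt_one_one_lt_sq_mul hlam
  set w := (q ^ 2 * lam)⁻¹
  have hw₀ : 0 ≤ w := by positivity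
  have hw₁ : w < 1 := inv_lt_one_of_one_lt₀ hqlam
  set c := (1 - q) * L / 2 with hc_def
  have hc : 0 < c := half_pos (mul_pos (sub_pos.2 hq₁) hL)
  have h₀ := hfin 0 le_rfl
  set M := √(energy a 0)
  have hM₀ : 0 < M := sqrt_pos.2 (hL.trans_le (hLE 0 le_rfl))
  have hM := fun j t (ht : 0 ≤ t) => hsol.le_sqrt_energy_zero hlam₀.le hnn h₀ j ht
  have hρ : 0 < (1 - exp (-1)) * exp (-8) * c ^ 2 / M := by
    have : 0 < 1 - exp (-1) := sub_pos.2 (exp_lt_one_iff.2 (by norm_num))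
    positivity
  refine not_bddAbove_image_of_forall_exists_add_mul_le hρ
    (hsol.monotoneOn_weightedLoss hlam₀.le hnn h₀ hw₀ hw₁) (fun t ht => ?_)
    ⟨energy a 0 / (1 - w), ?_⟩
  · have hconc : c / (1 - q) < energy a t := by
      have : c / (1 - q) = L / 2 := by rw [hc_def]; field_simp [(sub_pos.2 hq₁).ne']
      linarith [hLE t ht]
    obtain ⟨k, hk⟩ := exists_mul_pow_lt_of_div_lt_tsum (hfin t ht) hq₀.le hq₁ hconc
    exact hsol.exists_weightedLoss_add_mul_le hlam.le hnn h₀ hM hM₀ hq₀ hqlam hc.le ht hk.le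
  · rintro _ ⟨t, ht, rfl⟩
    exact hsol.weightedLoss_le hlam₀.le hnn h₀ hw₀ hw₁ ht

end IsInviscidSol

/-- Barbato–Flandoli–Morandin: the energy of a positive finite-energy solution of the
inviscid dyadic model vanishes asymptotically (anomalous dissipation). -/
theorem inviscid_positive_anomalous_dissipation (lam : ℝ) (hlam : 1 < lam)
    (a : ℕ → ℝ → ℝ) (hsol : IsInviscidSol lam a)
    (hpos : ∀ j : ℕ, ∀ t : ℝ, 0 ≤ t → 0 < a j t)
    (hfin : ∀ t : ℝ, 0 ≤ t → Summable (fun j : ℕ => (a j t) ^ 2)) :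
    Tendsto (fun t : ℝ => ∑' j : ℕ, (a j t) ^ 2) atTop (nhds 0) := by
  have hnn : ∀ j t, 0 ≤ t → 0 ≤ a j t := fun j t ht => (hpos j t ht).le
  have hanti := hsol.energy_antitoneOn (zero_le_one.trans hlam.le) hnn hfin
  refine tendsto_order.2 ⟨fun L hL => Eventually.of_forall fun t =>
    hL.trans_le (tsum_nonneg fun _ => sq_nonneg _), fun L hL => ?_⟩
  obtain ⟨t₀, ht₀, hlt⟩ := hsol.exists_energy_lt hlam hnn hfin hL
  exact eventually_atTop.2 ⟨t₀, fun t ht => (hanti ht₀ (ht₀.trans ht) ht).trans_lt hlt⟩
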